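/- Let Q be a probability mass function on Â. If D_min^{P,Q} < D < D_max^{P,Q}, then there exists a unique λ < 0 such that Λ'_{P,Q}(λ) = D, and for this λ one has Λ*_{P,Q}(D) = λ·D − Λ_{P,Q}(λ). -/

import Mathlib

open Real MeasureTheory Finset
open scoped Classical

/-- `Q` is a probability mass function on `Fin k`. -/
def IsPmf {k : ℕ} (Q : Fin k → ℝ) : Prop := (∀ j, 0 ≤ Q j) ∧ ∑ j, Q j = 1

/-- `Λ_{P,Q}(λ) = E_P[ln Σ_j Q_j e^{λ ρ(X,a_j)}]`. -/
noncomputable def Lam {k : ℕ} (P : Measure ℝ) (ρ : ℝ → Fin k → ℝ)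
    (Q : Fin k → ℝ) (l : ℝ) : ℝ :=
  ∫ x, Real.log (∑ j, Q j * Real.exp (l * ρ x j)) ∂P

/-- The cost `∫ Σ_j W(x)({a_j}) log₂ (W(x)({a_j}) / Q_j) dP(x)` of a Markov kernel,
with the conventions `0 · log 0 = 0` (automatic in Lean) and value `⊤` if on a set of
positive `P`-measure `w x j > 0` for some `j` with `Q j = 0`. -/
noncomputable def wCost {k : ℕ} (P : Measure ℝ) (Q : Fin k → ℝ)
    (w : ℝ → Fin k → ℝ) : EReal :=
  if ∀ᵐ x ∂P, ∀ j, 0 < w x j → 0 < Q j then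
    ((∫ x, ∑ j, w x j * Real.logb 2 (w x j / Q j) ∂P : ℝ) : EReal)
  else ⊤

/-- `R(P,Q,D)`: infimum over Markov kernels `w` from `ℝ` to `Fin k` with
`∫ Σ_j w x j ρ(x,a_j) dP ≤ D` of the relative-entropy cost. -/
noncomputable def RPQ {k : ℕ} (P : Measure ℝ) (ρ : ℝ → Fin k → ℝ)
    (Q : Fin k → ℝ) (D : ℝ) : EReal :=
  ⨅ w ∈ {w : ℝ → Fin k → ℝ | Measurable w ∧ (∀ x j, 0 ≤ w x j) ∧
      (∀ x, ∑ j, w x j = 1) ∧ ∫ x, ∑ j, w x j * ρ x j ∂P ≤ D}, wCost P Q w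

/-- The rate-distortion function `R(D) = inf_Q R(P,Q,D)`. -/
noncomputable def RofD {k : ℕ} (P : Measure ℝ) (ρ : ℝ → Fin k → ℝ) (D : ℝ) : EReal :=
  ⨅ Q ∈ {Q : Fin k → ℝ | IsPmf Q}, RPQ P ρ Q D

/-- `D_max = min_j E_P[ρ(X,a_j)]`. -/
noncomputable def Dmax {k : ℕ} (P : Measure ℝ) (ρ : ℝ → Fin k → ℝ) : ℝ :=
  sInf (Set.range fun j => ∫ x, ρ x j ∂P)

/-- `D_min^{P,Q} = E_P[min_{a ∈ supp Q} ρ(X,a)]`. -/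
noncomputable def DminPQ {k : ℕ} (P : Measure ℝ) (ρ : ℝ → Fin k → ℝ)
    (Q : Fin k → ℝ) : ℝ :=
  ∫ x, (⨅ j : {j : Fin k // 0 < Q j}, ρ x (j : Fin k)) ∂P

/-- `D_max^{P,Q} = Σ_j Q_j · E_P[ρ(X,a_j)]`. -/
noncomputable def DmaxPQ {k : ℕ} (P : Measure ℝ) (ρ : ℝ → Fin k → ℝ)
    (Q : Fin k → ℝ) : ℝ :=
  ∑ j, Q j * ∫ x, ρ x j ∂P

/-- The Fenchel–Legendre transform `Λ*_{P,Q}(D) = sup_{λ ≤ 0} [λ·D − Λ_{P,Q}(λ)]`. -/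
noncomputable def LamStar {k : ℕ} (P : Measure ℝ) (ρ : ℝ → Fin k → ℝ)
    (Q : Fin k → ℝ) (D : ℝ) : EReal :=
  ⨆ l ∈ Set.Iic (0 : ℝ), ((l * D - Lam P ρ Q l : ℝ) : EReal)

/-!
`Λ_{P,Q}` integrates the log-partition function `λ ↦ log Σ_j Q_j e^{λ ρ(x,a_j)}`, whose
derivative is the mean of `ρ(x,·)` under the tilted law `Q_j e^{λ ρ(x,a_j)} / Z` and whose
second derivative is the corresponding variance. So `Λ'` is nondecreasing, equals `D_max^{P,Q}`
at `0` and tends to `D_min^{P,Q}` as `λ → -∞`; it is even strictly increasing, since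
`D_min^{P,Q} < D_max^{P,Q}` forces `ρ(x,·)` to be non-constant on `supp Q` on a set of positive
measure. Darboux's theorem then gives a root of `Λ' = D` in `(-∞, 0)`, strict monotonicity makes
it unique, and by convexity of `Λ` the tangent line at that root lies below `Λ`, so the root
maximises `λ D - Λ(λ)`.
-/

open Filter Topology

lemma ConvexOn.add_mul_sub_le_of_hasDerivAt {f : ℝ → ℝ} {f' x : ℝ} (hf : ConvexOn ℝ Set.univ f)
    (hd : HasDerivAt f f' x) (y : ℝ) : f x + f' * (y - x) ≤ f y := by
  rcases lt_trichotomy y x with hyx | rfl | hxy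
  · have := hf.slope_le_of_hasDerivAt (Set.mem_univ y) (Set.mem_univ x) hyx hd
    rw [slope_def_field, div_le_iff₀ (sub_pos.2 hyx)] at this
    linarith
  · simp
  · have := hf.le_slope_of_hasDerivAt (Set.mem_univ x) (Set.mem_univ y) hxy hd
    rw [slope_def_field, le_div_iff₀ (sub_pos.2 hxy)] at this
    linarith

lemma ConvexOn.iSup_Iic_sub_eq_of_hasDerivAt {f : ℝ → ℝ} {D l : ℝ} (hf : ConvexOn ℝ Set.univ f)
    (hd : HasDerivAt f D l) (hl : l ≤ 0) :
    ⨆ m ∈ Set.Iic (0 : ℝ), ((m * D - f m : ℝ) : EReal) = ((l * D - f l : ℝ) : EReal) := by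
  refine le_antisymm (iSup₂_le fun m _ => EReal.coe_le_coe_iff.2 ?_) (le_iSup₂_of_le l hl le_rfl)
  linarith [hf.add_mul_sub_le_of_hasDerivAt hd m]

lemma existsUnique_neg_hasDerivAt_eq {f g : ℝ → ℝ} {a D : ℝ} (hfg : ∀ l, HasDerivAt f (g l) l)
    (hg : StrictMono g) (hlim : Tendsto g atBot (𝓝 a)) (haD : a < D) (hD : D < g 0) :
    ∃! l, l < 0 ∧ HasDerivAt f D l := by
  -- Darboux's theorem, so `g` need not be continuous
  obtain ⟨l₁, hl₁D, hl₁⟩ := ((hlim.eventually_lt_const haD).and (eventually_lt_atBot 0)).exists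
  obtain ⟨l, hl, rfl⟩ := exists_hasDerivWithinAt_eq_of_gt_of_lt hl₁.le
    (fun y _ => (hfg y).hasDerivWithinAt) hl₁D hD
  exact ⟨l, ⟨hl.2, hfg l⟩, fun y hy => hg.injective ((hfg y).unique hy.2)⟩

section Tilted

variable {ι : Type*} [Fintype ι]

noncomputable def partitionFn (q r : ι → ℝ) (l : ℝ) : ℝ := ∑ j, q j * exp (l * r j)

noncomputable def tiltedMean (q r : ι → ℝ) (l : ℝ) : ℝ :=
  (∑ j, q j * r j * exp (l * r j)) / partitionFn q r l

lemma two_mul_sum_sq_mul_sum_sub_sq (w r : ι → ℝ) :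
    2 * ((∑ j, w j * r j ^ 2) * ∑ j, w j - (∑ j, w j * r j) ^ 2)
      = ∑ i, ∑ j, w i * w j * (r i - r j) ^ 2 := by
  have expand : ∀ i j, w i * w j * (r i - r j) ^ 2
      = w i * r i ^ 2 * w j + w j * r j ^ 2 * w i - 2 * (w i * r i) * (w j * r j) :=
    fun i j => by ring
  simp only [expand, Finset.sum_add_distrib, Finset.sum_sub_distrib, ← Finset.mul_sum,
    ← Finset.sum_mul]
  ring

lemma exists_pos_of_sum_eq_one {q : ι → ℝ} (hq : ∑ j, q j = 1) : ∃ j, 0 < q j :=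
  let ⟨j, _, hj⟩ := Finset.exists_lt_of_sum_lt (s := Finset.univ) (f := fun _ => (0 : ℝ))
    (g := q) (by simp [hq])
  ⟨j, hj⟩

variable {q r : ι → ℝ}

lemma partitionFn_pos (hq : ∀ j, 0 ≤ q j) (hq₀ : ∃ j, 0 < q j) (l : ℝ) :
    0 < partitionFn q r l :=
  let ⟨j, hj⟩ := hq₀
  Finset.sum_pos' (fun i _ => mul_nonneg (hq i) (exp_pos _).le)
    ⟨j, Finset.mem_univ _, mul_pos hj (exp_pos _)⟩

lemma partitionFn_zero (hq : ∑ j, q j = 1) : partitionFn q r 0 = 1 := by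
  simp [partitionFn, hq]

lemma hasDerivAt_sum_mul_exp (c : ι → ℝ) (l : ℝ) :
    HasDerivAt (fun y => ∑ j, c j * exp (y * r j)) (∑ j, c j * r j * exp (l * r j)) l :=
  HasDerivAt.fun_sum fun j _ =>
    (((hasDerivAt_mul_const (r j)).exp).const_mul (c j)).congr_deriv (by ring)

lemma hasDerivAt_log_partitionFn (hq : ∀ j, 0 ≤ q j) (hq₀ : ∃ j, 0 < q j) (l : ℝ) :
    HasDerivAt (fun y => log (partitionFn q r y)) (tiltedMean q r l) l :=
  (hasDerivAt_sum_mul_exp q l).log (partitionFn_pos hq hq₀ l).ne'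

lemma hasDerivAt_tiltedMean (hq : ∀ j, 0 ≤ q j) (hq₀ : ∃ j, 0 < q j) (l : ℝ) :
    HasDerivAt (tiltedMean q r)
      ((∑ i, ∑ j, q i * exp (l * r i) * (q j * exp (l * r j)) * (r i - r j) ^ 2)
        / (2 * partitionFn q r l ^ 2)) l := by
  have hZ := partitionFn_pos (r := r) hq hq₀ l
  refine ((hasDerivAt_sum_mul_exp (fun j => q j * r j) l).div (hasDerivAt_sum_mul_exp q l)
    hZ.ne').congr_deriv ?_
  have hN : ∑ j, q j * r j * exp (l * r j) = ∑ j, q j * exp (l * r j) * r j :=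
    Finset.sum_congr rfl fun j _ => by ring
  have hN₂ : ∑ j, q j * r j * r j * exp (l * r j) = ∑ j, q j * exp (l * r j) * r j ^ 2 :=
    Finset.sum_congr rfl fun j _ => by ring
  rw [← two_mul_sum_sq_mul_sum_sub_sq, hN, hN₂, partitionFn]
  field_simp

lemma monotone_tiltedMean (hq : ∀ j, 0 ≤ q j) (hq₀ : ∃ j, 0 < q j) :
    Monotone (tiltedMean q r) := by
  refine monotone_of_deriv_nonneg (fun l => (hasDerivAt_tiltedMean hq hq₀ l).differentiableAt)
    fun l => (hasDerivAt_tiltedMean hq hq₀ l).deriv ▸ ?_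
  have hw : ∀ j, 0 ≤ q j * exp (l * r j) := fun j => mul_nonneg (hq j) (exp_pos _).le
  exact div_nonneg (Finset.sum_nonneg fun i _ => Finset.sum_nonneg fun j _ =>
    mul_nonneg (mul_nonneg (hw i) (hw j)) (sq_nonneg _)) (by positivity)

lemma strictMono_tiltedMean (hq : ∀ j, 0 ≤ q j) {i₀ j₀ : ι} (hi₀ : 0 < q i₀) (hj₀ : 0 < q j₀)
    (hr : r i₀ ≠ r j₀) : StrictMono (tiltedMean q r) := by
  refine strictMono_of_deriv_pos fun l => (hasDerivAt_tiltedMean hq ⟨i₀, hi₀⟩ l).deriv ▸ ?_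
  have hw : ∀ j, 0 ≤ q j * exp (l * r j) := fun j => mul_nonneg (hq j) (exp_pos _).le
  have hterm : ∀ i j, 0 ≤ q i * exp (l * r i) * (q j * exp (l * r j)) * (r i - r j) ^ 2 :=
    fun i j => mul_nonneg (mul_nonneg (hw i) (hw j)) (sq_nonneg _)
  refine div_pos ?_ (by have := partitionFn_pos (r := r) hq ⟨i₀, hi₀⟩ l; positivity)
  refine Finset.sum_pos' (fun i _ => Finset.sum_nonneg fun j _ => hterm i j)
    ⟨i₀, Finset.mem_univ _, Finset.sum_pos' (fun j _ => hterm i₀ j) ⟨j₀, Finset.mem_univ _, ?_⟩⟩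
  have := sub_ne_zero.2 hr
  positivity

lemma abs_tiltedMean_le (hq : ∀ j, 0 ≤ q j) (hq₀ : ∃ j, 0 < q j) {M : ℝ}
    (hr : ∀ j, |r j| ≤ M) (l : ℝ) : |tiltedMean q r l| ≤ M := by
  have hZ := partitionFn_pos (r := r) hq hq₀ l
  rw [tiltedMean, abs_div, abs_of_pos hZ, div_le_iff₀ hZ, partitionFn, Finset.mul_sum]
  refine (Finset.abs_sum_le_sum_abs _ _).trans (Finset.sum_le_sum fun j _ => ?_)
  rw [abs_mul, abs_mul, abs_of_nonneg (hq j), abs_of_pos (exp_pos _)]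
  have := mul_le_mul_of_nonneg_left (hr j) (mul_nonneg (hq j) (exp_pos (l * r j)).le)
  linarith

lemma abs_log_partitionFn_le (hq : ∀ j, 0 ≤ q j) (hq₁ : ∑ j, q j = 1) {M : ℝ}
    (hr : ∀ j, |r j| ≤ M) (l : ℝ) : |log (partitionFn q r l)| ≤ M * |l| := by
  have hq₀ := exists_pos_of_sum_eq_one hq₁
  have := Convex.norm_image_sub_le_of_norm_hasDerivWithin_le
    (fun y _ => (hasDerivAt_log_partitionFn (r := r) hq hq₀ y).hasDerivWithinAt)
    (fun y _ => abs_tiltedMean_le hq hq₀ hr y) convex_univ (Set.mem_univ 0) (Set.mem_univ l)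
  simpa [partitionFn_zero hq₁] using this

lemma tendsto_sum_mul_exp_atBot {c s : ι → ℝ} (hs : ∀ j, c j ≠ 0 → 0 ≤ s j) :
    Tendsto (fun l => ∑ j, c j * exp (l * s j)) atBot
      (𝓝 (∑ j, if s j = 0 then c j else 0)) := by
  refine tendsto_finsetSum _ fun j _ => ?_
  by_cases hs₀ : s j = 0
  · simp [hs₀]
  by_cases hc : c j = 0
  · simp [hc]
  have hpos : 0 < s j := (hs j hc).lt_of_ne' hs₀
  simpa [hs₀] using
    ((tendsto_exp_atBot.comp (tendsto_id.atBot_mul_const hpos)).const_mul (c j))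

lemma tiltedMean_eq_shift (m l : ℝ) : tiltedMean q r l
    = (∑ j, q j * r j * exp (l * (r j - m))) / ∑ j, q j * exp (l * (r j - m)) := by
  have h : ∀ j, exp (l * (r j - m)) = exp (l * r j) * exp (-(l * m)) := fun j => by
    rw [← exp_add]; ring_nf
  simp only [h, ← mul_assoc, ← Finset.sum_mul, tiltedMean, partitionFn]
  rw [mul_div_mul_right _ _ (exp_pos _).ne']

lemma tendsto_tiltedMean_atBot (hq : ∀ j, 0 ≤ q j) (hq₀ : ∃ j, 0 < q j) :
    Tendsto (tiltedMean q r) atBot (𝓝 (⨅ j : {j // 0 < q j}, r j)) := by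
  -- after shifting `r` by its minimum `m` over `supp q`, only the indices with `r j = m`
  -- survive as `l → -∞`
  have : Nonempty {j // 0 < q j} := let ⟨j, hj⟩ := hq₀; ⟨⟨j, hj⟩⟩
  obtain ⟨a, ha⟩ := Finite.exists_min fun j : {j // 0 < q j} => r j
  set m := ⨅ j : {j // 0 < q j}, r j
  have hma : m = r a := le_antisymm (ciInf_le (Finite.bddBelow_range _) a) (le_ciInf ha)
  have hs : ∀ j, q j ≠ 0 → 0 ≤ r j - m := fun j hj =>
    sub_nonneg.2 (hma ▸ ha ⟨j, (hq j).lt_of_ne' hj⟩)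
  have hden := tendsto_sum_mul_exp_atBot hs
  have hnum := tendsto_sum_mul_exp_atBot (c := fun j => q j * r j)
    fun j hj => hs j (left_ne_zero_of_mul hj)
  have hden₀ : 0 < ∑ j, if r j - m = 0 then q j else 0 :=
    Finset.sum_pos' (fun j _ => by split_ifs <;> simp [hq j])
      ⟨a, Finset.mem_univ _, by simp [hma, a.2]⟩
  have hlim : ((∑ j, if r j - m = 0 then q j * r j else 0) /
      ∑ j, if r j - m = 0 then q j else 0) = m := by
    rw [div_eq_iff hden₀.ne', Finset.mul_sum]
    refine Finset.sum_congr rfl fun j _ => ?_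
    split_ifs with h
    · rw [show r j = m by linarith, mul_comm]
    · simp
  rw [← hlim]
  exact (hnum.div hden hden₀.ne').congr fun l => (tiltedMean_eq_shift m l).symm

end Tilted

lemma IsPmf.exists_pos {k : ℕ} {Q : Fin k → ℝ} (hQ : IsPmf Q) : ∃ j, 0 < Q j :=
  exists_pos_of_sum_eq_one hQ.2

noncomputable def lamDeriv {k : ℕ} (P : Measure ℝ) (ρ : ℝ → Fin k → ℝ) (Q : Fin k → ℝ)
    (l : ℝ) : ℝ :=
  ∫ x, tiltedMean Q (ρ x) l ∂P

section LogMgf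

variable {k : ℕ} {P : Measure ℝ} {ρ : ℝ → Fin k → ℝ} {Q : Fin k → ℝ} {M : ℝ}

lemma dminPQ_eq_dmaxPQ_of_ae_const (hQ : IsPmf Q)
    (hconst : ∀ᵐ x ∂P, ∀ i j, 0 < Q i → 0 < Q j → ρ x i = ρ x j) :
    DminPQ P ρ Q = DmaxPQ P ρ Q := by
  obtain ⟨j₀, hj₀⟩ := hQ.exists_pos
  have : Nonempty {j // 0 < Q j} := ⟨⟨j₀, hj₀⟩⟩
  have hmin : DminPQ P ρ Q = ∫ x, ρ x j₀ ∂P := by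
    refine integral_congr_ae (hconst.mono fun x hx => ?_)
    exact le_antisymm (ciInf_le (Finite.bddBelow_range _) (⟨j₀, hj₀⟩ : {j // 0 < Q j}))
      (le_ciInf fun j => (hx j₀ j hj₀ j.2).le)
  have hterm : ∀ j, Q j * ∫ x, ρ x j ∂P = Q j * ∫ x, ρ x j₀ ∂P := fun j => by
    rcases (hQ.1 j).eq_or_lt with hj | hj
    · simp [← hj]
    · exact congrArg _ (integral_congr_ae (hconst.mono fun x hx => hx j j₀ hj hj₀))
  rw [hmin, DmaxPQ, Finset.sum_congr rfl fun j _ => hterm j, ← Finset.sum_mul, hQ.2, one_mul]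

lemma measurable_log_partitionFn (hρ : Measurable ρ) (l : ℝ) :
    Measurable fun x => log (partitionFn Q (ρ x) l) := by
  unfold partitionFn; fun_prop

lemma measurable_tiltedMean (hρ : Measurable ρ) (l : ℝ) :
    Measurable fun x => tiltedMean Q (ρ x) l := by
  unfold tiltedMean partitionFn; fun_prop

lemma ae_norm_tiltedMean_le (hQ : IsPmf Q) (hρM : ∀ᵐ x ∂P, ∀ j, |ρ x j| ≤ M) :
    ∀ᵐ x ∂P, ∀ l, ‖tiltedMean Q (ρ x) l‖ ≤ M :=
  hρM.mono fun _ hx => abs_tiltedMean_le hQ.1 hQ.exists_pos hx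

variable [IsFiniteMeasure P]

lemma integrable_tiltedMean (hQ : IsPmf Q) (hρ : Measurable ρ)
    (hρM : ∀ᵐ x ∂P, ∀ j, |ρ x j| ≤ M) (l : ℝ) :
    Integrable (fun x => tiltedMean Q (ρ x) l) P :=
  .of_bound (measurable_tiltedMean hρ l).aestronglyMeasurable M
    ((ae_norm_tiltedMean_le hQ hρM).mono fun _ hx => hx l)

lemma hasDerivAt_lam (hQ : IsPmf Q) (hρ : Measurable ρ) (hρM : ∀ᵐ x ∂P, ∀ j, |ρ x j| ≤ M)
    (l : ℝ) : HasDerivAt (Lam P ρ Q) (lamDeriv P ρ Q l) l := by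
  have hint : Integrable (fun x => log (partitionFn Q (ρ x) l)) P :=
    .of_bound (measurable_log_partitionFn hρ l).aestronglyMeasurable (M * |l|)
      (hρM.mono fun _ hx => abs_log_partitionFn_le hQ.1 hQ.2 hx l)
  exact (hasDerivAt_integral_of_dominated_loc_of_deriv_le
    (F := fun l x => log (partitionFn Q (ρ x) l)) (bound := fun _ => M) univ_mem
    (.of_forall fun l => (measurable_log_partitionFn hρ l).aestronglyMeasurable) hint
    (measurable_tiltedMean hρ l).aestronglyMeasurable
    ((ae_norm_tiltedMean_le hQ hρM).mono fun _ hx y _ => hx y) (integrable_const M)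
    (.of_forall fun _ y _ => hasDerivAt_log_partitionFn hQ.1 hQ.exists_pos y)).2

lemma monotone_lamDeriv (hQ : IsPmf Q) (hρ : Measurable ρ)
    (hρM : ∀ᵐ x ∂P, ∀ j, |ρ x j| ≤ M) : Monotone (lamDeriv P ρ Q) := fun _ _ h =>
  integral_mono (integrable_tiltedMean hQ hρ hρM _) (integrable_tiltedMean hQ hρ hρM _)
    fun _ => monotone_tiltedMean hQ.1 hQ.exists_pos h

lemma lamDeriv_zero (hQ : IsPmf Q) (hρ : Measurable ρ) (hρM : ∀ᵐ x ∂P, ∀ j, |ρ x j| ≤ M) :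
    lamDeriv P ρ Q 0 = DmaxPQ P ρ Q := by
  have hρj : ∀ j, Integrable (fun x => ρ x j) P := fun j =>
    .of_bound (hρ.eval (a := j)).aestronglyMeasurable M (hρM.mono fun _ hx => hx j)
  have h₀ : ∀ x, tiltedMean Q (ρ x) 0 = ∑ j, Q j * ρ x j := fun x => by
    simp [tiltedMean, partitionFn_zero hQ.2]
  simp only [lamDeriv, h₀]
  rw [integral_finsetSum _ fun j _ => (hρj j).const_mul _]
  simp only [integral_const_mul, DmaxPQ]

lemma tendsto_lamDeriv_atBot (hQ : IsPmf Q) (hρ : Measurable ρ)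
    (hρM : ∀ᵐ x ∂P, ∀ j, |ρ x j| ≤ M) :
    Tendsto (lamDeriv P ρ Q) atBot (𝓝 (DminPQ P ρ Q)) :=
  tendsto_integral_filter_of_dominated_convergence (fun _ => M)
    (.of_forall fun l => (measurable_tiltedMean hρ l).aestronglyMeasurable)
    (.of_forall fun l => (ae_norm_tiltedMean_le hQ hρM).mono fun _ hx => hx l)
    (integrable_const M) (.of_forall fun _ => tendsto_tiltedMean_atBot hQ.1 hQ.exists_pos)

lemma strictMono_lamDeriv (hQ : IsPmf Q) (hρ : Measurable ρ)
    (hρM : ∀ᵐ x ∂P, ∀ j, |ρ x j| ≤ M) (hD : DminPQ P ρ Q ≠ DmaxPQ P ρ Q) :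
    StrictMono (lamDeriv P ρ Q) := by
  intro l₁ l₂ hl
  refine (monotone_lamDeriv hQ hρ hρM hl.le).lt_of_ne fun heq =>
    hD (dminPQ_eq_dmaxPQ_of_ae_const hQ ?_)
  have hint := (integrable_tiltedMean hQ hρ hρM l₂).sub (integrable_tiltedMean hQ hρ hρM l₁)
  have hzero := (integral_eq_zero_iff_of_nonneg
    (fun _ => sub_nonneg.2 (monotone_tiltedMean hQ.1 hQ.exists_pos hl.le)) hint).1
    (by rw [integral_sub (integrable_tiltedMean hQ hρ hρM l₂)
      (integrable_tiltedMean hQ hρ hρM l₁)]; exact sub_eq_zero.2 heq.symm)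
  filter_upwards [hzero] with x hx i j hi hj
  by_contra hne
  exact (strictMono_tiltedMean hQ.1 hi hj hne hl).ne' (sub_eq_zero.1 hx)

end LogMgf

theorem stmt_9_general {k : ℕ} (A : Set ℝ)
    (P : Measure ℝ) [IsProbabilityMeasure P] (hsupp : P Aᶜ = 0)
    (M : ℝ) (ρ : ℝ → Fin k → ℝ) (hρmeas : ∀ j, Measurable fun x => ρ x j)
    (hρnn : ∀ x ∈ A, ∀ j, 0 ≤ ρ x j) (hρM : ∀ x ∈ A, ∀ j, ρ x j ≤ M)
    (Q : Fin k → ℝ) (hQ : IsPmf Q)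
    (D : ℝ) (hD1 : DminPQ P ρ Q < D) (hD2 : D < DmaxPQ P ρ Q) :
    (∃! l : ℝ, l < 0 ∧ HasDerivAt (Lam P ρ Q) D l) ∧
    ∀ l : ℝ, l < 0 → HasDerivAt (Lam P ρ Q) D l →
      LamStar P ρ Q D = ((l * D - Lam P ρ Q l : ℝ) : EReal) := by
  have hρ : Measurable ρ := measurable_pi_lambda _ hρmeas
  have hρb : ∀ᵐ x ∂P, ∀ j, |ρ x j| ≤ M := (ae_iff.2 hsupp).mono fun x hx j =>
    (abs_of_nonneg (hρnn x hx j)).symm ▸ hρM x hx j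
  have hderiv := hasDerivAt_lam hQ hρ hρb
  have hconvex : ConvexOn ℝ Set.univ (Lam P ρ Q) :=
    Monotone.convexOn_univ_of_deriv (fun l => (hderiv l).differentiableAt)
      ((funext fun l => (hderiv l).deriv) ▸ monotone_lamDeriv hQ hρ hρb)
  refine ⟨existsUnique_neg_hasDerivAt_eq hderiv
    (strictMono_lamDeriv hQ hρ hρb (hD1.trans hD2).ne) (tendsto_lamDeriv_atBot hQ hρ hρb) hD1
    ((lamDeriv_zero hQ hρ hρb).symm ▸ hD2), fun l hl hd => ?_⟩
  exact hconvex.iSup_Iic_sub_eq_of_hasDerivAt hd hl.le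

/-- **Lemma 1(ii).** If `D_min^{P,Q} < D < D_max^{P,Q}`, then there is a unique
`λ < 0` with `Λ'_{P,Q}(λ) = D`, and for this `λ` one has
`Λ*_{P,Q}(D) = λ·D − Λ_{P,Q}(λ)`. -/
theorem stmt_9 {k : ℕ} (hk : 0 < k) (A : Set ℝ) (hA : MeasurableSet A)
    (P : Measure ℝ) [IsProbabilityMeasure P] (hsupp : P Aᶜ = 0)
    (M : ℝ) (ρ : ℝ → Fin k → ℝ) (hρmeas : ∀ j, Measurable fun x => ρ x j)
    (hρnn : ∀ x ∈ A, ∀ j, 0 ≤ ρ x j) (hρM : ∀ x ∈ A, ∀ j, ρ x j ≤ M)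
    (hρmin : ∀ x ∈ A, ∃ j, ρ x j = 0)
    (Q : Fin k → ℝ) (hQ : IsPmf Q)
    (D : ℝ) (hD1 : DminPQ P ρ Q < D) (hD2 : D < DmaxPQ P ρ Q) :
    (∃! l : ℝ, l < 0 ∧ HasDerivAt (Lam P ρ Q) D l) ∧
    ∀ l : ℝ, l < 0 → HasDerivAt (Lam P ρ Q) D l →
      LamStar P ρ Q D = ((l * D - Lam P ρ Q l : ℝ) : EReal) :=
  stmt_9_general A P hsupp M ρ hρmeas hρnn hρM Q hQ D hD1 hD2
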